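/- Let m ≥ 2 and n ≥ 2 be integers with gcd(m, n) = 1, let a be an integer with gcd(a, mn) = 1, and let X, Y be integers satisfying m²X + n²Y = 1. Then C_{mn}(a) ≡ (n·λ(n)/gcd(λ(m), λ(n)))·Y·C_m(a) + (m·λ(m)/gcd(λ(m), λ(n)))·X·C_n(a) (mod mn). -/

import Mathlib

/-- The Carmichael function `λ(m)`: the smallest positive integer `n` such that
`a ^ n ≡ 1 (mod m)` for every integer `a` coprime to `m`. -/
noncomputable def carmichael (m : ℕ) : ℕ :=
  sInf {n : ℕ | 0 < n ∧ ∀ a : ℤ, Int.gcd a m = 1 → a ^ n ≡ 1 [ZMOD (m : ℤ)]}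

/-- The Carmichael quotient `C_m(a) = (a^{λ(m)} - 1) / m`. -/
noncomputable def carQuot (m : ℕ) (a : ℤ) : ℤ := (a ^ carmichael m - 1) / m

/-!
`λ(m)` is the exponent of `(ZMod m)ˣ`, so by the Chinese remainder theorem
`λ(mn) = lcm(λ(m), λ(n)) = λ(m) · λ(n)/g` with `g = gcd(λ(m), λ(n))`. Writing `a^{λ(m)} = 1 + m C_m(a)`,
the binomial theorem gives `mn C_{mn}(a) = (1 + m C_m(a))^{λ(n)/g} - 1 ≡ (λ(n)/g) m C_m(a) (mod m²)`,
i.e. `n² C_{mn}(a) ≡ (n λ(n)/g) C_m(a) (mod mn)`, and symmetrically with `m` and `n` exchanged.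
Multiplying these by `Y` and `X` and adding gives the claim, since `C_{mn}(a) = (m²X + n²Y) C_{mn}(a)`.
-/

lemma intCast_pow_eq_one_iff_modEq {m : ℕ} (a : ℤ) (k : ℕ) :
    (a : ZMod m) ^ k = 1 ↔ a ^ k ≡ 1 [ZMOD m] := by
  rw [← ZMod.intCast_eq_intCast_iff]
  push_cast
  rfl

lemma isUnit_intCast_of_gcd_eq_one {m : ℕ} {a : ℤ} (h : Int.gcd a m = 1) :
    IsUnit (a : ZMod m) := by
  have h' := (Int.isCoprime_iff_gcd_eq_one.mpr h).map (Int.castRingHom (ZMod m))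
  simp only [Int.coe_castRingHom, Int.cast_natCast, ZMod.natCast_self] at h'
  exact isCoprime_zero_right.mp h'

lemma intCast_pow_exponent_units {m : ℕ} {a : ℤ} (h : Int.gcd a m = 1) :
    (a : ZMod m) ^ Monoid.exponent (ZMod m)ˣ = 1 := by
  obtain ⟨u, hu⟩ := isUnit_intCast_of_gcd_eq_one h
  rw [← hu, ← Units.val_pow_eq_pow_val, Monoid.pow_exponent_eq_one, Units.val_one]

theorem carmichael_eq_exponent (m : ℕ) [NeZero m] :
    carmichael m = Monoid.exponent (ZMod m)ˣ := by
  refine IsLeast.csInf_eq ⟨⟨Monoid.exponent_pos.mpr Monoid.ExponentExists.of_finite,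
    fun a ha => (intCast_pow_eq_one_iff_modEq a _).mp (intCast_pow_exponent_units ha)⟩, ?_⟩
  rintro k ⟨hk, hpow⟩
  refine Nat.le_of_dvd hk (Monoid.exponent_dvd_of_forall_pow_eq_one fun u => Units.ext ?_)
  have hu := hpow ((u : ZMod m).val : ℤ) (by rw [Int.gcd_natCast_natCast]; exact ZMod.val_coe_unit_coprime u)
  simpa using (intCast_pow_eq_one_iff_modEq _ _).mpr hu

theorem pow_carmichael_modEq_one {m : ℕ} [NeZero m] {a : ℤ} (ha : Int.gcd a m = 1) :
    a ^ carmichael m ≡ 1 [ZMOD m] := by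
  rw [← intCast_pow_eq_one_iff_modEq, carmichael_eq_exponent]
  exact intCast_pow_exponent_units ha

theorem mul_carQuot {m : ℕ} [NeZero m] {a : ℤ} (ha : Int.gcd a m = 1) :
    (m : ℤ) * carQuot m a = a ^ carmichael m - 1 :=
  Int.mul_ediv_cancel' (pow_carmichael_modEq_one ha).symm.dvd

theorem carmichael_mul {m n : ℕ} [NeZero m] [NeZero n] (h : m.Coprime n) :
    carmichael (m * n) = Nat.lcm (carmichael m) (carmichael n) := by
  rw [carmichael_eq_exponent, carmichael_eq_exponent, carmichael_eq_exponent,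
    Monoid.exponent_eq_of_mulEquiv
      ((Units.mapEquiv (ZMod.chineseRemainder h).toMulEquiv).trans MulEquiv.prodUnits),
    Monoid.exponent_prod]
  rfl

lemma one_add_mul_pow_modEq (m c : ℤ) (k : ℕ) :
    (1 + m * c) ^ k ≡ 1 + k * (m * c) [ZMOD m ^ 2] := by
  refine (Int.modEq_iff_dvd.mpr ?_).symm
  rw [show (1 + m * c) ^ k - (1 + k * (m * c)) = (1 + m * c) ^ k - 1 ^ (k - 1) * (m * c) * k - 1 ^ k
    by ring]
  exact (pow_dvd_pow_of_dvd (dvd_mul_right m c) 2).trans (sq_dvd_add_pow_sub_sub (m * c) 1 k)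

theorem sq_mul_carQuot_mul_modEq {m n : ℕ} [NeZero m] [NeZero n] (hmn : m.Coprime n) {a : ℤ}
    (ha : Int.gcd a (m * n) = 1) :
    (n : ℤ) ^ 2 * carQuot (m * n) a ≡
      ((n * carmichael n / Nat.gcd (carmichael m) (carmichael n) : ℕ) : ℤ) * carQuot m a
        [ZMOD m * n] := by
  set k := carmichael n / Nat.gcd (carmichael m) (carmichael n)
  have hk : carmichael (m * n) = carmichael m * k := by
    rw [carmichael_mul hmn, Nat.lcm, Nat.mul_div_assoc _ (Nat.gcd_dvd_right _ _)]
  have ham : Int.gcd a m = 1 :=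
    Int.isCoprime_iff_gcd_eq_one.mp (Int.isCoprime_iff_gcd_eq_one.mpr ha).of_mul_right_left
  have hmn_quot : (m * n : ℤ) * carQuot (m * n) a = (1 + m * carQuot m a) ^ k - 1 := by
    rw [mul_carQuot ham, add_sub_cancel, ← pow_mul, ← hk]
    exact_mod_cast mul_carQuot (m := m * n) (by exact_mod_cast ha)
  have hbinom : (m : ℤ) * (n * carQuot (m * n) a) ≡ m * (k * carQuot m a) [ZMOD m * m] := by
    refine Int.ModEq.add_left_cancel' 1 ?_
    rw [← sq, ← mul_assoc, hmn_quot, add_sub_cancel]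
    convert one_add_mul_pow_modEq m (carQuot m a) k using 2
    ring
  have h := (Int.ModEq.mul_left_cancel' (by exact_mod_cast NeZero.ne m) hbinom).mul_left' (c := n)
  rw [Nat.mul_div_assoc _ (Nat.gcd_dvd_right _ _), Nat.cast_mul, mul_comm (m : ℤ)]
  convert h using 1 <;> ring

theorem stmt7 (m n : ℕ) (hm : 2 ≤ m) (hn : 2 ≤ n) (hmn : Nat.gcd m n = 1)
    (a : ℤ) (ha : Int.gcd a (m * n) = 1)
    (X Y : ℤ) (hXY : (m : ℤ) ^ 2 * X + (n : ℤ) ^ 2 * Y = 1) :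
    carQuot (m * n) a ≡
      ((n * carmichael n / Nat.gcd (carmichael m) (carmichael n) : ℕ) : ℤ) * Y * carQuot m a +
        ((m * carmichael m / Nat.gcd (carmichael m) (carmichael n) : ℕ) : ℤ) * X *
          carQuot n a [ZMOD ((m : ℤ) * n)] := by
  have : NeZero m := ⟨by omega⟩
  have : NeZero n := ⟨by omega⟩
  have hm_part := sq_mul_carQuot_mul_modEq hmn ha
  have hn_part := sq_mul_carQuot_mul_modEq (Nat.Coprime.symm hmn) (a := a) (by rwa [mul_comm])
  rw [mul_comm n m, Nat.gcd_comm, mul_comm (n : ℤ)] at hn_part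
  calc carQuot (m * n) a
      = Y * ((n : ℤ) ^ 2 * carQuot (m * n) a) + X * ((m : ℤ) ^ 2 * carQuot (m * n) a) := by
        linear_combination (-carQuot (m * n) a) * hXY
    _ ≡ _ [ZMOD m * n] := (hm_part.mul_left Y).add (hn_part.mul_left X)
    _ = _ := by ring
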